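/- arXiv:2007.00363 — 3 statements merged into one kernel-verified Lean document; each statement's English description precedes it below -/
import Mathlib

section
/- Under the assumptions of the complete-DFT covariance identity, if additionally the autocovariance satisfies ∑_{r∈ℤ} |r·c(r)| < ∞, then |E[|J_n(ω)|²] − f(ω)| ≤ (1/n) ∑_{r∈ℤ} |r·c(r)| + ∑_{|r| ≥ n} |c(r)|, and hence E[|J_n(ω)|²] = f(ω) + O(1/n) uniformly in ω. -/
/-!
Expanding `|J_n(ω)|²` and integrating against the covariance gives
`E|J_n(ω)|² = ∑_{|r|<n} (1 - |r|/n) c(r) e^{irω}`, since exactly `n - |r|` pairs `(s, t)` in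
`{1, …, n}²` have `t - s = r`. Subtracting `f(ω) = ∑_r c(r) e^{irω}` leaves
`∑_r (w_n(r) - 1) c(r) e^{irω}` with triangular weights `w_n(r) = (1 - |r|/n)₊`, and
`|w_n(r) - 1| ≤ |r|/n` for every `r`, so the difference is at most `n⁻¹ ∑_r |r c(r)|`.
-/

open MeasureTheory Finset ComplexConjugate

theorem card_filter_add_mem_Icc (n : ℕ) (r : ℤ) :
    #{s ∈ Icc (1 : ℤ) n | s + r ∈ Icc (1 : ℤ) n} = n - r.natAbs := by
  have h : {s ∈ Icc (1 : ℤ) n | s + r ∈ Icc (1 : ℤ) n} =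
      Icc (max 1 (1 - r)) (min (n : ℤ) (n - r)) := by
    ext s
    simp only [mem_filter, mem_Icc]
    omega
  rw [h, Int.card_Icc]
  omega

theorem sum_Icc_sum_Icc_sub {M : Type*} [AddCommMonoid M] (n : ℕ) (g : ℤ → M) :
    ∑ s ∈ Icc (1 : ℤ) n, ∑ t ∈ Icc (1 : ℤ) n, g (t - s) =
      ∑ r ∈ Icc (1 - (n : ℤ)) (n - 1), (n - r.natAbs) • g r := by
  have reindex : ∀ s ∈ Icc (1 : ℤ) n, ∑ t ∈ Icc (1 : ℤ) n, g (t - s) =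
      ∑ r ∈ Icc (1 - (n : ℤ)) (n - 1), if s + r ∈ Icc (1 : ℤ) n then g r else 0 := by
    intro s hs
    rw [← sum_filter]
    refine sum_nbij' (· - s) (· + s) ?_ ?_ (fun _ _ => by simp) (fun _ _ => by simp)
      (fun _ _ => rfl) <;>
    · intro x hx
      simp only [mem_filter, mem_Icc] at hs hx ⊢
      omega
  rw [sum_congr rfl reindex, sum_comm]
  refine sum_congr rfl fun r _ => ?_
  rw [← sum_filter, sum_const, card_filter_add_mem_Icc]

theorem integral_norm_sq_sum_mul {Ω ι : Type*} [MeasurableSpace Ω] {μ : Measure Ω}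
    (X : ι → Ω → ℝ) (hX : ∀ i, MemLp (X i) 2 μ) (I : Finset ι) (a : ι → ℂ) :
    ((∫ x, ‖∑ i ∈ I, (X i x : ℂ) * a i‖ ^ 2 ∂μ : ℝ) : ℂ) =
      ∑ i ∈ I, ∑ j ∈ I, (∫ x, X i x * X j x ∂μ) * (conj (a i) * a j) := by
  have hint : ∀ i j,
      Integrable (fun x => ((X i x * X j x : ℝ) : ℂ) * (conj (a i) * a j)) μ :=
    fun i j => ((hX i).integrable_mul (hX j)).ofReal.mul_const _
  have expand : ∀ x, ((‖∑ i ∈ I, (X i x : ℂ) * a i‖ ^ 2 : ℝ) : ℂ) =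
      ∑ i ∈ I, ∑ j ∈ I, ((X i x * X j x : ℝ) : ℂ) * (conj (a i) * a j) := by
    intro x
    rw [Complex.ofReal_pow, ← Complex.conj_mul', map_sum, sum_mul_sum]
    refine sum_congr rfl fun i _ => sum_congr rfl fun j _ => ?_
    simp only [map_mul, Complex.conj_ofReal, Complex.ofReal_mul]
    ring
  refine integral_ofReal.symm.trans ((integral_congr_ae (.of_forall expand)).trans ?_)
  rw [integral_finsetSum _ fun i _ => integrable_finsetSum _ fun j _ => hint i j]
  refine sum_congr rfl fun i _ => ?_
  rw [integral_finsetSum _ fun j _ => hint i j]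
  refine sum_congr rfl fun j _ => ?_
  rw [integral_mul_const]
  exact congrArg (· * _) integral_ofReal

theorem conj_exp_mul_exp (s t : ℤ) (ω : ℝ) :
    conj (Complex.exp (Complex.I * s * ω)) * Complex.exp (Complex.I * t * ω) =
      Complex.exp (Complex.I * (t - s : ℤ) * ω) := by
  rw [← Complex.exp_conj, ← Complex.exp_add]
  congr 1
  simp only [map_mul, Complex.conj_I, Complex.conj_ofReal, map_intCast]
  push_cast
  ring

theorem Summable.abs_of_natAbs_mul {c : ℤ → ℝ}
    (h : Summable fun r : ℤ => (r.natAbs : ℝ) * |c r|) : Summable fun r => |c r| := by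
  refine h.of_norm_bounded_eventually ?_
  filter_upwards [Filter.eventually_cofinite_ne 0] with r hr
  rw [Real.norm_eq_abs, abs_abs]
  exact le_mul_of_one_le_left (abs_nonneg _) (by exact_mod_cast Int.natAbs_pos.mpr hr)

noncomputable def dft {Ω : Type*} (X : ℤ → Ω → ℝ) (n : ℕ) (ω : ℝ) (x : Ω) : ℂ :=
  (Real.sqrt n : ℂ)⁻¹ *
    ∑ t ∈ Icc (1 : ℤ) n, (X t x : ℂ) * Complex.exp (Complex.I * t * ω)

/-- The triangular weight `(1 - |r| / n)₊`, written with truncated subtraction. -/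
noncomputable def bartlettWeight (n : ℕ) (r : ℤ) : ℝ := ((n - r.natAbs : ℕ) : ℝ) / n

theorem abs_bartlettWeight_sub_one_le {n : ℕ} (hn : n ≠ 0) (r : ℤ) :
    |bartlettWeight n r - 1| ≤ r.natAbs / n := by
  have hn' : (0 : ℝ) < n := by positivity
  rcases le_total n r.natAbs with hr | hr
  · rw [bartlettWeight, Nat.sub_eq_zero_of_le hr, Nat.cast_zero, zero_div, zero_sub, abs_neg,
      abs_one, one_le_div hn']
    exact_mod_cast hr
  · rw [bartlettWeight, Nat.cast_sub hr, sub_div, div_self hn'.ne', sub_sub_cancel_left, abs_neg,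
      abs_of_nonneg (by positivity)]

theorem norm_ofReal_mul_exp_I_mul (a : ℝ) (r : ℤ) (ω : ℝ) :
    ‖(a : ℂ) * Complex.exp (Complex.I * r * ω)‖ = |a| := by
  rw [norm_mul, Complex.norm_real, Real.norm_eq_abs, mul_comm Complex.I, mul_right_comm,
    ← Complex.ofReal_intCast, ← Complex.ofReal_mul, Complex.norm_exp_ofReal_mul_I, mul_one]

section

variable {Ω : Type*} [MeasurableSpace Ω] {μ : Measure Ω}
  {X : ℤ → Ω → ℝ} {c : ℤ → ℝ}

theorem integral_norm_dft_sq (hL2 : ∀ t, MemLp (X t) 2 μ)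
    (hcov : ∀ s t, ∫ x, X s x * X t x ∂μ = c (t - s)) (n : ℕ) (ω : ℝ) :
    ((∫ x, ‖dft X n ω x‖ ^ 2 ∂μ : ℝ) : ℂ) = (n : ℂ)⁻¹ *
      ∑ s ∈ Icc (1 : ℤ) n, ∑ t ∈ Icc (1 : ℤ) n,
        c (t - s) * Complex.exp (Complex.I * (t - s : ℤ) * ω) := by
  have hnorm : ∀ x, ‖dft X n ω x‖ ^ 2 = (n : ℝ)⁻¹ *
      ‖∑ t ∈ Icc (1 : ℤ) n, (X t x : ℂ) * Complex.exp (Complex.I * t * ω)‖ ^ 2 := by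
    intro x
    rw [dft, norm_mul, mul_pow, norm_inv, Complex.norm_real, Real.norm_eq_abs,
      abs_of_nonneg (Real.sqrt_nonneg _), inv_pow, Real.sq_sqrt n.cast_nonneg]
  simp_rw [hnorm]
  rw [integral_const_mul, Complex.ofReal_mul, integral_norm_sq_sum_mul X hL2, Complex.ofReal_inv,
    Complex.ofReal_natCast]
  simp only [hcov, conj_exp_mul_exp]

theorem hasSum_bartlettWeight_mul (hL2 : ∀ t, MemLp (X t) 2 μ)
    (hcov : ∀ s t, ∫ x, X s x * X t x ∂μ = c (t - s)) (n : ℕ) (ω : ℝ) :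
    HasSum (fun r => (bartlettWeight n r : ℂ) * (c r * Complex.exp (Complex.I * r * ω)))
      ((∫ x, ‖dft X n ω x‖ ^ 2 ∂μ : ℝ) : ℂ) := by
  rw [integral_norm_dft_sq hL2 hcov,
    sum_Icc_sum_Icc_sub n fun r => (c r : ℂ) * Complex.exp (Complex.I * r * ω), mul_sum]
  have hzero : ∀ r ∉ Icc (1 - (n : ℤ)) (n - 1),
      (bartlettWeight n r : ℂ) * (c r * Complex.exp (Complex.I * r * ω)) = 0 := by
    intro r hr
    rw [mem_Icc, not_and_or] at hr
    rw [bartlettWeight, Nat.sub_eq_zero_of_le (by omega), Nat.cast_zero, zero_div,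
      Complex.ofReal_zero, zero_mul]
  convert hasSum_sum_of_ne_finset_zero (L := .unconditional ℤ) hzero using 1
  refine sum_congr rfl fun r _ => ?_
  rw [bartlettWeight, nsmul_eq_mul, Complex.ofReal_div, Complex.ofReal_natCast,
    Complex.ofReal_natCast, div_eq_inv_mul]
  ring

theorem norm_integral_norm_dft_sq_sub_tsum_le (hL2 : ∀ t, MemLp (X t) 2 μ)
    (hcov : ∀ s t, ∫ x, X s x * X t x ∂μ = c (t - s))
    (hsum : Summable fun r : ℤ => (r.natAbs : ℝ) * |c r|) {n : ℕ} (hn : n ≠ 0) (ω : ℝ) :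
    ‖((∫ x, ‖dft X n ω x‖ ^ 2 ∂μ : ℝ) : ℂ) -
        ∑' r : ℤ, (c r : ℂ) * Complex.exp (Complex.I * r * ω)‖ ≤
      1 / n * ∑' r : ℤ, (r.natAbs : ℝ) * |c r| := by
  have hf : Summable fun r : ℤ => (c r : ℂ) * Complex.exp (Complex.I * r * ω) :=
    .of_norm_bounded hsum.abs_of_natAbs_mul fun r => (norm_ofReal_mul_exp_I_mul _ r ω).le
  refine ((hasSum_bartlettWeight_mul hL2 hcov n ω).sub hf.hasSum).norm_le_of_bounded
    (hsum.hasSum.mul_left _) fun r => ?_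
  calc ‖(bartlettWeight n r : ℂ) * (c r * Complex.exp (Complex.I * r * ω)) -
          c r * Complex.exp (Complex.I * r * ω)‖
      = |bartlettWeight n r - 1| * |c r| := by
        rw [← sub_one_mul, ← Complex.ofReal_one, ← Complex.ofReal_sub, ← mul_assoc,
          ← Complex.ofReal_mul, norm_ofReal_mul_exp_I_mul, abs_mul]
    _ ≤ r.natAbs / n * |c r| := by gcongr; exact abs_bartlettWeight_sub_one_le hn r
    _ = 1 / n * (r.natAbs * |c r|) := by ring

end

theorem stmt_4_general {Ω : Type*} [MeasurableSpace Ω] (μ : Measure Ω)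
    (X : ℤ → Ω → ℝ) (c : ℤ → ℝ)
    (hL2 : ∀ t : ℤ, MemLp (X t) 2 μ)
    (hcov : ∀ s t : ℤ, ∫ ω, X s ω * X t ω ∂μ = c (t - s))
    (hsum : Summable fun r : ℤ => (r.natAbs : ℝ) * |c r|)
    (J : ℕ → ℝ → Ω → ℂ)
    (hJ : ∀ (n : ℕ) (ω : ℝ), J n ω = fun ω' => (Real.sqrt n : ℂ)⁻¹ *
      ∑ t ∈ Finset.Icc (1 : ℤ) (n : ℤ),
        (X t ω' : ℂ) * Complex.exp (Complex.I * (t : ℂ) * (ω : ℂ)))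
    (f : ℝ → ℂ)
    (hf : ∀ ω : ℝ, f ω = ∑' r : ℤ,
      (c r : ℂ) * Complex.exp (Complex.I * (r : ℂ) * (ω : ℂ))) :
    (∀ n : ℕ, 1 ≤ n → ∀ ω : ℝ,
      ‖((∫ ω', ‖J n ω ω'‖ ^ 2 ∂μ : ℝ) : ℂ) - f ω‖ ≤
        (1 / n) * (∑' r : ℤ, (r.natAbs : ℝ) * |c r|) +
          ∑' r : ℤ, (if (n : ℤ) ≤ |r| then |c r| else 0)) ∧
    (∃ C : ℝ, ∀ n : ℕ, 1 ≤ n → ∀ ω : ℝ,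
      ‖((∫ ω', ‖J n ω ω'‖ ^ 2 ∂μ : ℝ) : ℂ) - f ω‖ ≤ C / n) := by
  obtain rfl : J = dft X := funext₂ hJ
  have bias : ∀ n : ℕ, 1 ≤ n → ∀ ω : ℝ,
      ‖((∫ ω', ‖dft X n ω ω'‖ ^ 2 ∂μ : ℝ) : ℂ) - f ω‖ ≤
        1 / n * ∑' r : ℤ, (r.natAbs : ℝ) * |c r| := fun n hn ω => by
    rw [hf]
    exact norm_integral_norm_dft_sq_sub_tsum_le hL2 hcov hsum (by omega) ω
  have tail_nonneg (n : ℕ) : 0 ≤ ∑' r : ℤ, (if (n : ℤ) ≤ |r| then |c r| else 0) :=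
    tsum_nonneg fun r => ite_nonneg (abs_nonneg _) le_rfl
  exact ⟨fun n hn ω => (bias n hn ω).trans (le_add_of_nonneg_right (tail_nonneg n)),
    _, fun n hn ω => (bias n hn ω).trans_eq (one_div_mul_eq_div _ _)⟩

/-- Bias of the regular periodogram: under `∑_r |r c(r)| < ∞`,
`|E[|J_n(ω)|²] − f(ω)| ≤ n⁻¹ ∑_r |r c(r)| + ∑_{|r| ≥ n} |c(r)|`, and hence
`E[|J_n(ω)|²] = f(ω) + O(1/n)` uniformly in `ω`. -/
theorem stmt_4 {Ω : Type*} [MeasurableSpace Ω] (μ : Measure Ω) [IsProbabilityMeasure μ]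
    (X : ℤ → Ω → ℝ) (c : ℤ → ℝ)
    (hL2 : ∀ t : ℤ, MemLp (X t) 2 μ)
    (hmean : ∀ t : ℤ, ∫ ω, X t ω ∂μ = 0)
    (hcov : ∀ s t : ℤ, ∫ ω, X s ω * X t ω ∂μ = c (t - s))
    (hsum : Summable fun r : ℤ => (r.natAbs : ℝ) * |c r|)
    (J : ℕ → ℝ → Ω → ℂ)
    (hJ : ∀ (n : ℕ) (ω : ℝ), J n ω = fun ω' => (Real.sqrt n : ℂ)⁻¹ *
      ∑ t ∈ Finset.Icc (1 : ℤ) (n : ℤ),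
        (X t ω' : ℂ) * Complex.exp (Complex.I * (t : ℂ) * (ω : ℂ)))
    (f : ℝ → ℂ)
    (hf : ∀ ω : ℝ, f ω = ∑' r : ℤ,
      (c r : ℂ) * Complex.exp (Complex.I * (r : ℂ) * (ω : ℂ))) :
    (∀ n : ℕ, 1 ≤ n → ∀ ω : ℝ,
      ‖((∫ ω', ‖J n ω ω'‖ ^ 2 ∂μ : ℝ) : ℂ) - f ω‖ ≤
        (1 / n) * (∑' r : ℤ, (r.natAbs : ℝ) * |c r|) +
          ∑' r : ℤ, (if (n : ℤ) ≤ |r| then |c r| else 0)) ∧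
    (∃ C : ℝ, ∀ n : ℕ, 1 ≤ n → ∀ ω : ℝ,
      ‖((∫ ω', ‖J n ω ω'‖ ^ 2 ∂μ : ℝ) : ℂ) - f ω‖ ≤ C / n) :=
  stmt_4_general μ X c hL2 hcov hsum J hJ f hf
end

section
/- Let X be a mean-zero second-order stationary process with summable autocovariance c and spectral density f(ω) = ∑_r c(r) e^{irω}. Let h_{1,n}, …, h_{n,n} be real weights with ∑_{t=1}^n h_{t,n} = n, and set J_{h,n}(ω) = n^{-1/2} ∑_{t=1}^n h_{t,n} X_t e^{itω}. Then, with J̃_n(ω) the complete DFT (regular DFT plus the L²-convergent predictive DFT built from projections onto span{X_1,…,X_n}), E[ J̃_n(ω) · conj(J_{h,n}(ω)) ] = f(ω). More generally, without the constraint, E[ J̃_n(ω) · conj(J_{h,n}(ω)) ] = (n^{-1} ∑_{t=1}^n h_{t,n}) · f(ω). -/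
/-
Write `Y_s` for `X_s` when `1 ≤ s ≤ n` and for the predictor `X̂_s` otherwise. The partial sums
of the complete DFT are `n^{-1/2} ∑_{s=-m}^{n+m} Y_s e^{isω}`, and by the projection property
`cov(Y_s, X_t) = c(s - t)` for every `s` and every `1 ≤ t ≤ n`, exactly as if `Y` were the
stationary process itself. Hence the cross moment of such a partial sum with `J_{h,n}` is
`n⁻¹ ∑_t h_t ∑_{s=-m}^{n+m} c(s - t) e^{i(s-t)ω}`, whose inner sums tend to `f(ω)` as `m → ∞`.
On the other side the partial sums converge in L², and pairing with the fixed L² variable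
`J_{h,n}` is continuous, so these cross moments converge to `E[J̃_n conj J_{h,n}]`.
-/

open MeasureTheory Filter Topology Finset

section L2

variable {α ι 𝕜 : Type*} [MeasurableSpace α] {μ : Measure α} [RCLike 𝕜]

lemma enorm_integral_mul_le_eLpNorm_mul_eLpNorm {f g : α → 𝕜} (hf : AEStronglyMeasurable f μ)
    (hg : AEStronglyMeasurable g μ) :
    ‖∫ x, f x * g x ∂μ‖ₑ ≤ eLpNorm f 2 μ * eLpNorm g 2 μ :=
  calc ‖∫ x, f x * g x ∂μ‖ₑ ≤ ∫⁻ x, ‖f x * g x‖ₑ ∂μ := enorm_integral_le_lintegral_enorm _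
    _ = eLpNorm (f • g) 1 μ := eLpNorm_one_eq_lintegral_enorm.symm
    _ ≤ eLpNorm f 2 μ * eLpNorm g 2 μ :=
      eLpNorm_smul_le_mul_eLpNorm (p := 2) (q := 2) (r := 1) hg hf

lemma tendsto_integral_mul_of_tendsto_eLpNorm_sub {l : Filter ι} {F : ι → α → 𝕜}
    {f g : α → 𝕜} (hF : ∀ i, MemLp (F i) 2 μ) (hf : MemLp f 2 μ) (hg : MemLp g 2 μ)
    (hFf : Tendsto (fun i => eLpNorm (fun x => F i x - f x) 2 μ) l (𝓝 0)) :
    Tendsto (fun i => ∫ x, F i x * g x ∂μ) l (𝓝 (∫ x, f x * g x ∂μ)) := by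
  rw [tendsto_iff_edist_tendsto_0]
  have hbound : ∀ i, edist (∫ x, F i x * g x ∂μ) (∫ x, f x * g x ∂μ) ≤
      eLpNorm (fun x => F i x - f x) 2 μ * eLpNorm g 2 μ := fun i => by
    have hFg : Integrable (fun x => F i x * g x) μ := (hF i).integrable_mul hg
    have hfg : Integrable (fun x => f x * g x) μ := hf.integrable_mul hg
    rw [edist_eq_enorm_sub, ← integral_sub hFg hfg]
    simp_rw [← sub_mul]
    exact enorm_integral_mul_le_eLpNorm_mul_eLpNorm ((hF i).sub hf).1 hg.1
  have hlim : Tendsto (fun i => eLpNorm (fun x => F i x - f x) 2 μ * eLpNorm g 2 μ) l (𝓝 0) := by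
    simpa using ENNReal.Tendsto.mul_const hFf (.inr hg.eLpNorm_ne_top)
  exact tendsto_of_tendsto_of_tendsto_of_le_of_le tendsto_const_nhds hlim (fun _ => zero_le)
    hbound

lemma integral_sum_mul_conj_sum {Y Z : ι → α → ℝ} (hY : ∀ s, MemLp (Y s) 2 μ)
    (hZ : ∀ t, MemLp (Z t) 2 μ) (U V : Finset ι) (a b : ι → ℂ) :
    ∫ x, (∑ s ∈ U, (Y s x : ℂ) * a s) * (starRingEnd ℂ) (∑ t ∈ V, (Z t x : ℂ) * b t) ∂μ =
      ∑ s ∈ U, ∑ t ∈ V, a s * (starRingEnd ℂ) (b t) * ∫ x, Y s x * Z t x ∂μ := by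
  have hint : ∀ s t,
      Integrable (fun x => a s * (starRingEnd ℂ) (b t) * ((Y s x * Z t x : ℝ) : ℂ)) μ :=
    fun s t => ((hY s).integrable_mul (hZ t)).ofReal.const_mul _
  calc ∫ x, (∑ s ∈ U, (Y s x : ℂ) * a s) * (starRingEnd ℂ) (∑ t ∈ V, (Z t x : ℂ) * b t) ∂μ
      = ∫ x, ∑ s ∈ U, ∑ t ∈ V, a s * (starRingEnd ℂ) (b t) * ((Y s x * Z t x : ℝ) : ℂ) ∂μ := by
        simp_rw [map_sum, map_mul, Complex.conj_ofReal, sum_mul_sum]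
        push_cast
        refine integral_congr_ae (.of_forall fun x => sum_congr rfl fun s _ =>
          sum_congr rfl fun t _ => by ring)
    _ = ∑ s ∈ U, ∑ t ∈ V, a s * (starRingEnd ℂ) (b t) * ∫ x, Y s x * Z t x ∂μ := by
        rw [integral_finsetSum _ fun s _ => integrable_finsetSum _ fun t _ => hint s t]
        refine sum_congr rfl fun s _ => ?_
        rw [integral_finsetSum _ fun t _ => hint s t]
        refine sum_congr rfl fun t _ => ?_
        rw [integral_const_mul, integral_complex_ofReal]

lemma memLp_sum_ofReal_mul {Y : ι → α → ℝ} (hY : ∀ s, MemLp (Y s) 2 μ) (U : Finset ι)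
    (a : ι → ℂ) : MemLp (fun x => ∑ s ∈ U, (Y s x : ℂ) * a s) 2 μ :=
  memLp_finsetSum U fun s _ => (hY s).ofReal.mul_const (a s)

end L2

noncomputable def fourierPhase (ω : ℝ) (t : ℤ) : ℂ := Complex.exp (Complex.I * t * ω)

lemma fourierPhase_mul_conj (ω : ℝ) (s t : ℤ) :
    fourierPhase ω s * (starRingEnd ℂ) (fourierPhase ω t) = fourierPhase ω (s - t) := by
  simp only [fourierPhase, ← Complex.exp_conj, ← Complex.exp_add, map_mul, Complex.conj_I,
    Complex.conj_ofReal, map_intCast]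
  push_cast
  ring_nf

lemma norm_fourierPhase (ω : ℝ) (t : ℤ) : ‖fourierPhase ω t‖ = 1 := by
  rw [fourierPhase, show Complex.I * t * ω = ((t * ω : ℝ) : ℂ) * Complex.I by push_cast; ring,
    Complex.norm_exp_ofReal_mul_I]

lemma HasSum.tendsto_sum_Icc_sub {M : Type*} [AddCommMonoid M] [TopologicalSpace M]
    {g : ℤ → M} {a : M} (hg : HasSum g a) (b t : ℤ) :
    Tendsto (fun m : ℕ => ∑ s ∈ Icc (-(m : ℤ)) (b + m), g (s - t)) atTop (𝓝 a) := by
  have hshift : HasSum (fun s => g (s - t)) a := (Equiv.subRight t).hasSum_iff.mpr hg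
  refine hshift.comp (tendsto_atTop_finset_of_monotone
    (fun i j hij => Icc_subset_Icc (by omega) (by omega)) fun s => ?_)
  exact ⟨s.natAbs + b.natAbs, by simp only [mem_Icc]; omega⟩

lemma summable_ofReal_mul_fourierPhase {c : ℤ → ℝ} (hsum : Summable fun r => |c r|) (ω : ℝ) :
    Summable fun r => (c r : ℂ) * fourierPhase ω r :=
  Summable.of_norm <| by
    simpa only [norm_mul, Complex.norm_real, Real.norm_eq_abs, norm_fourierPhase, mul_one]
      using hsum

lemma tendsto_sum_mul_sum_Icc_autocov {c : ℤ → ℝ} (hsum : Summable fun r => |c r|) (ω : ℝ)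
    (h : ℤ → ℝ) (V : Finset ℤ) (b : ℤ) :
    Tendsto (fun m : ℕ => ∑ t ∈ V, h t * ∑ s ∈ Icc (-(m : ℤ)) (b + m),
        c (s - t) * fourierPhase ω (s - t)) atTop
      (𝓝 (∑ t ∈ V, h t * ∑' r, c r * fourierPhase ω r)) :=
  tendsto_finsetSum _ fun t _ => tendsto_const_nhds.mul
    ((summable_ofReal_mul_fourierPhase hsum ω).hasSum.tendsto_sum_Icc_sub b t)

section CompleteDFT

variable {α : Type*}

noncomputable def completeProcess (X Xhat : ℤ → α → ℝ) (n : ℕ) (s : ℤ) : α → ℝ :=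
  if s ∈ Icc (1 : ℤ) n then X s else Xhat s

lemma sum_Icc_completeProcess {M : Type*} [AddCommMonoid M] (X Xhat : ℤ → α → ℝ) (n m : ℕ)
    (g : ℤ → ℝ → M) (x : α) :
    ∑ s ∈ Icc (-(m : ℤ)) (n + m), g s (completeProcess X Xhat n s x) =
      ∑ s ∈ Icc (-(m : ℤ)) 0, g s (Xhat s x) + ∑ s ∈ Icc (1 : ℤ) n, g s (X s x) +
        ∑ s ∈ Icc ((n : ℤ) + 1) (n + m), g s (Xhat s x) := by
  have hsplit : Icc (-(m : ℤ)) (n + m) =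
      (Icc (-(m : ℤ)) 0 ∪ Icc (1 : ℤ) n) ∪ Icc ((n : ℤ) + 1) (n + m) := by
    ext; simp only [mem_union, mem_Icc]; omega
  have hpast : Disjoint (Icc (-(m : ℤ)) 0) (Icc (1 : ℤ) n) := by
    simp only [disjoint_left, mem_Icc]; omega
  have hfuture : Disjoint (Icc (-(m : ℤ)) 0 ∪ Icc (1 : ℤ) n) (Icc ((n : ℤ) + 1) (n + m)) := by
    simp only [disjoint_left, mem_union, mem_Icc]; omega
  rw [hsplit, sum_union hfuture, sum_union hpast]
  congr 1; congr 1
  all_goals refine sum_congr rfl fun s hs => ?_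
  all_goals simp only [mem_Icc] at hs
  all_goals simp only [completeProcess, mem_Icc]
  · rw [if_neg (by omega)]
  · rw [if_pos hs]
  · rw [if_neg (by omega)]

variable [MeasurableSpace α] {μ : Measure α}

lemma autocov_neg {X : ℤ → α → ℝ} {c : ℤ → ℝ}
    (hcov : ∀ s t, ∫ x, X s x * X t x ∂μ = c (t - s)) (r : ℤ) : c (-r) = c r :=
  calc c (-r) = ∫ x, X r x * X 0 x ∂μ := by rw [hcov]; simp
    _ = ∫ x, X 0 x * X r x ∂μ := by simp_rw [mul_comm]
    _ = c r := by rw [hcov]; simp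

lemma memLp_completeProcess {X Xhat : ℤ → α → ℝ} (hX : ∀ t, MemLp (X t) 2 μ)
    (hXhat : ∀ τ, MemLp (Xhat τ) 2 μ) (n : ℕ) (s : ℤ) :
    MemLp (completeProcess X Xhat n s) 2 μ := by
  unfold completeProcess
  split_ifs
  exacts [hX s, hXhat s]

lemma integral_completeProcess_mul {X Xhat : ℤ → α → ℝ} {c : ℤ → ℝ} {n : ℕ}
    (hcov : ∀ s t, ∫ x, X s x * X t x ∂μ = c (t - s))
    (hproj : ∀ τ, ∀ t ∈ Icc (1 : ℤ) n, ∫ x, X t x * Xhat τ x ∂μ = c (t - τ))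
    (s : ℤ) {t : ℤ} (ht : t ∈ Icc (1 : ℤ) n) :
    ∫ x, completeProcess X Xhat n s x * X t x ∂μ = c (s - t) := by
  rw [← neg_sub, autocov_neg hcov]
  unfold completeProcess
  split_ifs
  · exact hcov s t
  · simp_rw [mul_comm (Xhat s _)]
    exact hproj s t ht

end CompleteDFT

lemma integral_dft_mul_conj_taperedDFT {α : Type*} [MeasurableSpace α] {μ : Measure α}
    {Y X : ℤ → α → ℝ} {c : ℤ → ℝ} (hY : ∀ s, MemLp (Y s) 2 μ) (hX : ∀ t, MemLp (X t) 2 μ)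
    (U V : Finset ℤ) (hYX : ∀ s, ∀ t ∈ V, ∫ x, Y s x * X t x ∂μ = c (s - t)) (h : ℤ → ℝ)
    (ω : ℝ) :
    ∫ x, (∑ s ∈ U, (Y s x : ℂ) * fourierPhase ω s) *
        (starRingEnd ℂ) (∑ t ∈ V, (h t : ℂ) * (X t x : ℂ) * fourierPhase ω t) ∂μ =
      ∑ t ∈ V, h t * ∑ s ∈ U, c (s - t) * fourierPhase ω (s - t) := by
  simp_rw [mul_comm (h _ : ℂ) (X _ _ : ℂ), mul_assoc]
  rw [integral_sum_mul_conj_sum hY hX, sum_comm]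
  refine sum_congr rfl fun t ht => ?_
  rw [mul_sum]
  refine sum_congr rfl fun s _ => ?_
  rw [hYX s t ht, map_mul, Complex.conj_ofReal, ← fourierPhase_mul_conj]
  ring

lemma ofReal_inv_sqrt_mul_self (n : ℕ) :
    (Real.sqrt n : ℂ)⁻¹ * (Real.sqrt n : ℂ)⁻¹ = (n : ℂ)⁻¹ := by
  rw [← mul_inv, ← Complex.ofReal_mul, Real.mul_self_sqrt n.cast_nonneg, Complex.ofReal_natCast]

lemma integral_normalizedDFT_mul_conj_taperedDFT {α : Type*} [MeasurableSpace α]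
    {μ : Measure α} {Y X : ℤ → α → ℝ} {c : ℤ → ℝ} (hY : ∀ s, MemLp (Y s) 2 μ)
    (hX : ∀ t, MemLp (X t) 2 μ) (U V : Finset ℤ)
    (hYX : ∀ s, ∀ t ∈ V, ∫ x, Y s x * X t x ∂μ = c (s - t)) (h : ℤ → ℝ) (ω : ℝ) (n : ℕ) :
    ∫ x, ((Real.sqrt n : ℂ)⁻¹ * ∑ s ∈ U, (Y s x : ℂ) * fourierPhase ω s) *
        (starRingEnd ℂ) ((Real.sqrt n : ℂ)⁻¹ *
          ∑ t ∈ V, (h t : ℂ) * (X t x : ℂ) * fourierPhase ω t) ∂μ =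
      (n : ℂ)⁻¹ * ∑ t ∈ V, h t * ∑ s ∈ U, c (s - t) * fourierPhase ω (s - t) := by
  rw [← integral_dft_mul_conj_taperedDFT hY hX U V hYX, ← integral_const_mul]
  refine integral_congr_ae (.of_forall fun x => ?_)
  dsimp only
  rw [map_mul, map_inv₀, Complex.conj_ofReal]
  linear_combination (∑ s ∈ U, (Y s x : ℂ) * fourierPhase ω s) *
    (starRingEnd ℂ) (∑ t ∈ V, (h t : ℂ) * (X t x : ℂ) * fourierPhase ω t) *
      ofReal_inv_sqrt_mul_self n

theorem stmt_5_general {Ω : Type*} [MeasurableSpace Ω] (μ : Measure Ω)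
    (X : ℤ → Ω → ℝ) (c : ℤ → ℝ)
    (hL2 : ∀ t : ℤ, MemLp (X t) 2 μ)
    (hcov : ∀ s t : ℤ, ∫ ω, X s ω * X t ω ∂μ = c (t - s))
    (hsum : Summable fun r : ℤ => |c r|)
    (n : ℕ) (hn : 1 ≤ n) (ω : ℝ) (h : ℤ → ℝ)
    -- the best linear predictors of `X_τ` given `X_1,…,X_n`
    (Xhat : ℤ → Ω → ℝ)
    (hspan : ∀ τ : ℤ, ∃ φ : ℤ → ℝ,
      Xhat τ = fun ω' => ∑ t ∈ Finset.Icc (1 : ℤ) (n : ℤ), φ t * X t ω')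
    (hproj : ∀ (τ : ℤ), ∀ t ∈ Finset.Icc (1 : ℤ) (n : ℤ),
      ∫ ω', X t ω' * Xhat τ ω' ∂μ = c (t - τ))
    -- the regular and tapered DFTs
    (Jn Jh : Ω → ℂ)
    (hJn : Jn = fun ω' => (Real.sqrt n : ℂ)⁻¹ *
      ∑ t ∈ Finset.Icc (1 : ℤ) (n : ℤ),
        (X t ω' : ℂ) * Complex.exp (Complex.I * (t : ℂ) * (ω : ℂ)))
    (hJh : Jh = fun ω' => (Real.sqrt n : ℂ)⁻¹ *
      ∑ t ∈ Finset.Icc (1 : ℤ) (n : ℤ),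
        (h t : ℂ) * (X t ω' : ℂ) * Complex.exp (Complex.I * (t : ℂ) * (ω : ℂ)))
    -- the predictive DFT, as an L² limit of its partial sums
    (Jhat : Ω → ℂ) (S : ℕ → Ω → ℂ)
    (hS : ∀ m : ℕ, S m = fun ω' => (Real.sqrt n : ℂ)⁻¹ *
      ((∑ τ ∈ Finset.Icc (-(m : ℤ)) (0 : ℤ),
          (Xhat τ ω' : ℂ) * Complex.exp (Complex.I * (τ : ℂ) * (ω : ℂ))) +
       ∑ τ ∈ Finset.Icc ((n : ℤ) + 1) ((n : ℤ) + (m : ℤ)),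
          (Xhat τ ω' : ℂ) * Complex.exp (Complex.I * (τ : ℂ) * (ω : ℂ))))
    (hJhatL2 : MemLp Jhat 2 μ)
    (hconv : Tendsto (fun m => eLpNorm (fun ω' => S m ω' - Jhat ω') 2 μ)
      atTop (nhds 0)) :
    (∫ ω', (Jn ω' + Jhat ω') * (starRingEnd ℂ) (Jh ω') ∂μ =
      (((n : ℝ)⁻¹ * ∑ t ∈ Finset.Icc (1 : ℤ) (n : ℤ), h t : ℝ) : ℂ) *
        ∑' r : ℤ, (c r : ℂ) * Complex.exp (Complex.I * (r : ℂ) * (ω : ℂ))) ∧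
    ((∑ t ∈ Finset.Icc (1 : ℤ) (n : ℤ), h t) = (n : ℝ) →
      ∫ ω', (Jn ω' + Jhat ω') * (starRingEnd ℂ) (Jh ω') ∂μ =
        ∑' r : ℤ, (c r : ℂ) * Complex.exp (Complex.I * (r : ℂ) * (ω : ℂ))) := by
  simp only [← fourierPhase.eq_1] at hJn hJh hS ⊢
  set f := ∑' r : ℤ, (c r : ℂ) * fourierPhase ω r
  set Y := completeProcess X Xhat n
  have hXhat : ∀ τ, MemLp (Xhat τ) 2 μ := fun τ => by
    obtain ⟨φ, hφ⟩ := hspan τ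
    exact hφ ▸ memLp_finsetSum _ fun t _ => (hL2 t).const_mul (φ t)
  have hY : ∀ s, MemLp (Y s) 2 μ := memLp_completeProcess hL2 hXhat n
  have hJS : ∀ (m : ℕ) x, Jn x + S m x = (Real.sqrt n : ℂ)⁻¹ *
      ∑ s ∈ Icc (-(m : ℤ)) (n + m), (Y s x : ℂ) * fourierPhase ω s := fun m x => by
    rw [sum_Icc_completeProcess X Xhat n m (fun s y => (y : ℂ) * fourierPhase ω s), hJn, hS]
    ring
  have hpartial : ∀ m : ℕ, ∫ x, (Jn x + S m x) * (starRingEnd ℂ) (Jh x) ∂μ =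
      (n : ℂ)⁻¹ * ∑ t ∈ Icc (1 : ℤ) n,
        h t * ∑ s ∈ Icc (-(m : ℤ)) (n + m), c (s - t) * fourierPhase ω (s - t) := fun m => by
    rw [← integral_normalizedDFT_mul_conj_taperedDFT hY hL2 _ _
      (fun s t ht => integral_completeProcess_mul hcov hproj s ht)]
    simp only [hJS, hJh]
  have hJhL2 : MemLp Jh 2 μ := hJh ▸
    (memLp_finsetSum _ fun t _ => ((hL2 t).ofReal.const_mul (h t : ℂ)).mul_const _).const_mul _
  have hlim_left := tendsto_integral_mul_of_tendsto_eLpNorm_sub (F := fun m x => Jn x + S m x)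
    (f := fun x => Jn x + Jhat x) (g := fun x => (starRingEnd ℂ) (Jh x))
    (fun m => funext (hJS m) ▸ (memLp_sum_ofReal_mul hY _ _).const_mul _)
    ((hJn ▸ (memLp_sum_ofReal_mul hL2 _ _).const_mul _).add hJhatL2)
    hJhL2.star
    (by simpa only [add_sub_add_left_eq_sub] using hconv)
  have hmain : ∫ x, (Jn x + Jhat x) * (starRingEnd ℂ) (Jh x) ∂μ =
      (((n : ℝ)⁻¹ * ∑ t ∈ Icc (1 : ℤ) n, h t : ℝ) : ℂ) * f := by
    rw [tendsto_nhds_unique (hlim_left.congr hpartial)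
      ((tendsto_sum_mul_sum_Icc_autocov hsum ω h _ n).const_mul _), ← sum_mul]
    push_cast
    ring
  refine ⟨hmain, fun hh => ?_⟩
  rw [hmain, hh, inv_mul_cancel₀ (Nat.cast_ne_zero.mpr (by omega)), Complex.ofReal_one, one_mul]

/-- Tapered complete periodogram is unbiased:
`E[J̃_n(ω) conj(J_{h,n}(ω))] = (n⁻¹ ∑_t h_t) f(ω)`, and `= f(ω)` when `∑_t h_t = n`. -/
theorem stmt_5 {Ω : Type*} [MeasurableSpace Ω] (μ : Measure Ω) [IsProbabilityMeasure μ]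
    (X : ℤ → Ω → ℝ) (c : ℤ → ℝ)
    (hL2 : ∀ t : ℤ, MemLp (X t) 2 μ)
    (hmean : ∀ t : ℤ, ∫ ω, X t ω ∂μ = 0)
    (hcov : ∀ s t : ℤ, ∫ ω, X s ω * X t ω ∂μ = c (t - s))
    (hsum : Summable fun r : ℤ => |c r|)
    (n : ℕ) (hn : 1 ≤ n) (ω : ℝ) (h : ℤ → ℝ)
    -- the best linear predictors of `X_τ` given `X_1,…,X_n`
    (Xhat : ℤ → Ω → ℝ)
    (hspan : ∀ τ : ℤ, ∃ φ : ℤ → ℝ,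
      Xhat τ = fun ω' => ∑ t ∈ Finset.Icc (1 : ℤ) (n : ℤ), φ t * X t ω')
    (hproj : ∀ (τ : ℤ), ∀ t ∈ Finset.Icc (1 : ℤ) (n : ℤ),
      ∫ ω', X t ω' * Xhat τ ω' ∂μ = c (t - τ))
    -- the regular and tapered DFTs
    (Jn Jh : Ω → ℂ)
    (hJn : Jn = fun ω' => (Real.sqrt n : ℂ)⁻¹ *
      ∑ t ∈ Finset.Icc (1 : ℤ) (n : ℤ),
        (X t ω' : ℂ) * Complex.exp (Complex.I * (t : ℂ) * (ω : ℂ)))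
    (hJh : Jh = fun ω' => (Real.sqrt n : ℂ)⁻¹ *
      ∑ t ∈ Finset.Icc (1 : ℤ) (n : ℤ),
        (h t : ℂ) * (X t ω' : ℂ) * Complex.exp (Complex.I * (t : ℂ) * (ω : ℂ)))
    -- the predictive DFT, as an L² limit of its partial sums
    (Jhat : Ω → ℂ) (S : ℕ → Ω → ℂ)
    (hS : ∀ m : ℕ, S m = fun ω' => (Real.sqrt n : ℂ)⁻¹ *
      ((∑ τ ∈ Finset.Icc (-(m : ℤ)) (0 : ℤ),
          (Xhat τ ω' : ℂ) * Complex.exp (Complex.I * (τ : ℂ) * (ω : ℂ))) +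
       ∑ τ ∈ Finset.Icc ((n : ℤ) + 1) ((n : ℤ) + (m : ℤ)),
          (Xhat τ ω' : ℂ) * Complex.exp (Complex.I * (τ : ℂ) * (ω : ℂ))))
    (hJhatL2 : MemLp Jhat 2 μ)
    (hconv : Tendsto (fun m => eLpNorm (fun ω' => S m ω' - Jhat ω') 2 μ)
      atTop (nhds 0)) :
    (∫ ω', (Jn ω' + Jhat ω') * (starRingEnd ℂ) (Jh ω') ∂μ =
      (((n : ℝ)⁻¹ * ∑ t ∈ Finset.Icc (1 : ℤ) (n : ℤ), h t : ℝ) : ℂ) *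
        ∑' r : ℤ, (c r : ℂ) * Complex.exp (Complex.I * (r : ℂ) * (ω : ℂ))) ∧
    ((∑ t ∈ Finset.Icc (1 : ℤ) (n : ℤ), h t) = (n : ℝ) →
      ∫ ω', (Jn ω' + Jhat ω') * (starRingEnd ℂ) (Jh ω') ∂μ =
        ∑' r : ℤ, (c r : ℂ) * Complex.exp (Complex.I * (r : ℂ) * (ω : ℂ))) :=
  stmt_5_general μ X c hL2 hcov hsum n hn ω h Xhat hspan hproj Jn Jh hJn hJh Jhat S hS hJhatL2 hconv
end

section
/- Let X : ℤ → L⁴(Ω) be mean-zero and fourth-order stationary, with second cumulant κ₂(r) = E[X_t X_{t+r}] and fourth cumulant κ₄(r₁, r₂, r₃) = cum(X_t, X_{t+r₁}, X_{t+r₂}, X_{t+r₃}), and suppose S₂ := ∑_{r∈ℤ} |κ₂(r)| < ∞ and S₄ := ∑_{r₁,r₂,r₃∈ℤ} |κ₄(r₁,r₂,r₃)| < ∞. Fix ω ∈ ℝ, 1 ≤ i ≤ n, 0 ≤ j ≤ n. Define μ̌_i = n^{-1} ∑_{t=1}^n (X_t X_i − E[X_t X_i]) e^{itω} and č_j = ĉ_{j,n}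 − E[ĉ_{j,n}] with ĉ_{j,n} = n^{-1}∑_{t=1}^{n−j} X_t X_{t+j}. Then |cov(μ̌_i, č_j)| ≤ (2 S₂² + S₄)/n². -/
open MeasureTheory

/-!
Expanding both centred sums, the covariance is `n⁻²` times a double sum over `t` and `τ` of
unimodular phases times `cov(X_t X_i, X_τ X_{τ+j})`. By the product-cumulant formula this
covariance is `κ₄(i-t, τ-t, τ+j-t) + κ₂(τ-t) κ₂(τ+j-i) + κ₂(τ+j-t) κ₂(τ-i)`. The `κ₄` terms are
indexed injectively by `(t, τ)`, so they sum to at most `S₄`; each product of `κ₂` terms sums over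
`t` to at most `S₂` for fixed `τ`, and then over `τ` to at most `S₂²`.
-/

lemma sum_comp_le_tsum_of_injective {α β : Type*} {f : β → ℝ} (hf : Summable f)
    (hf0 : ∀ b, 0 ≤ f b) {g : α → β} (hg : Function.Injective g) (s : Finset α) :
    ∑ a ∈ s, f (g a) ≤ ∑' b, f b :=
  ((hf.comp_injective hg).sum_le_tsum s fun a _ => hf0 (g a)).trans
    (tsum_comp_le_tsum_of_inj hf hf0 hg)

lemma sum_sum_mul_le_tsum_mul_tsum {α β γ δ : Type*} {f : γ → ℝ} {g : δ → ℝ}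
    (hf : Summable f) (hf0 : ∀ c, 0 ≤ f c) (hg : Summable g) (hg0 : ∀ d, 0 ≤ g d)
    {φ : β → α → γ} (hφ : ∀ b, Function.Injective (φ b)) {ψ : β → δ}
    (hψ : Function.Injective ψ) (s : Finset α) (u : Finset β) :
    ∑ a ∈ s, ∑ b ∈ u, f (φ b a) * g (ψ b) ≤ (∑' c, f c) * ∑' d, g d := by
  rw [Finset.sum_comm]
  calc ∑ b ∈ u, ∑ a ∈ s, f (φ b a) * g (ψ b)
      = ∑ b ∈ u, (∑ a ∈ s, f (φ b a)) * g (ψ b) := by simp only [Finset.sum_mul]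
    _ ≤ ∑ b ∈ u, (∑' c, f c) * g (ψ b) := by
      gcongr with b
      exacts [hg0 _, sum_comp_le_tsum_of_injective hf hf0 (hφ b) s]
    _ = (∑' c, f c) * ∑ b ∈ u, g (ψ b) := by rw [Finset.mul_sum]
    _ ≤ (∑' c, f c) * ∑' d, g d := by
      gcongr
      exacts [tsum_nonneg hf0, sum_comp_le_tsum_of_injective hg hg0 hψ u]

lemma sum_sum_abs_cumulant_terms_le {κ₂ : ℤ → ℝ} {κ₄ : ℤ → ℤ → ℤ → ℝ}
    (hκ₂ : Summable fun r => |κ₂ r|)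
    (hκ₄ : Summable fun r : ℤ × ℤ × ℤ => |κ₄ r.1 r.2.1 r.2.2|) (T U : Finset ℤ) (i j : ℤ) :
    ∑ t ∈ T, ∑ τ ∈ U, |κ₄ (i - t) (τ - t) (τ + j - t) + κ₂ (τ - t) * κ₂ (τ + j - i)
        + κ₂ (τ + j - t) * κ₂ (τ - i)|
      ≤ 2 * (∑' r, |κ₂ r|) ^ 2 + ∑' r : ℤ × ℤ × ℤ, |κ₄ r.1 r.2.1 r.2.2| := by
  have h₄ : ∑ t ∈ T, ∑ τ ∈ U, |κ₄ (i - t) (τ - t) (τ + j - t)|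
      ≤ ∑' r : ℤ × ℤ × ℤ, |κ₄ r.1 r.2.1 r.2.2| := by
    rw [← Finset.sum_product']
    refine sum_comp_le_tsum_of_injective hκ₄ (fun _ => abs_nonneg _)
      (g := fun p : ℤ × ℤ => (i - p.1, p.2 - p.1, p.2 + j - p.1)) ?_ _
    intro p q h
    simp only [Prod.mk.injEq] at h
    exact Prod.ext (by omega) (by omega)
  have h₂₂ (a b : ℤ) : ∑ t ∈ T, ∑ τ ∈ U, |κ₂ (τ + a - t)| * |κ₂ (τ + b)|
      ≤ (∑' r, |κ₂ r|) * ∑' r, |κ₂ r| :=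
    sum_sum_mul_le_tsum_mul_tsum hκ₂ (fun _ => abs_nonneg _) hκ₂ (fun _ => abs_nonneg _)
      (φ := fun τ t => τ + a - t) (fun τ t t' h => by simpa using h)
      (ψ := fun τ => τ + b) (add_left_injective b) T U
  calc _ ≤ ∑ t ∈ T, ∑ τ ∈ U, (|κ₄ (i - t) (τ - t) (τ + j - t)|
          + |κ₂ (τ + 0 - t)| * |κ₂ (τ + (j - i))| + |κ₂ (τ + j - t)| * |κ₂ (τ + -i)|) := by
        gcongr with t _ τ _
        simp only [add_zero, ← add_sub_assoc, ← sub_eq_add_neg, ← abs_mul]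
        exact abs_add_three _ _ _
    _ = ∑ t ∈ T, ∑ τ ∈ U, |κ₄ (i - t) (τ - t) (τ + j - t)|
          + ∑ t ∈ T, ∑ τ ∈ U, |κ₂ (τ + 0 - t)| * |κ₂ (τ + (j - i))|
          + ∑ t ∈ T, ∑ τ ∈ U, |κ₂ (τ + j - t)| * |κ₂ (τ + -i)| := by
        simp only [Finset.sum_add_distrib]
    _ ≤ ∑' r : ℤ × ℤ × ℤ, |κ₄ r.1 r.2.1 r.2.2| + (∑' r, |κ₂ r|) * (∑' r, |κ₂ r|)
          + (∑' r, |κ₂ r|) * (∑' r, |κ₂ r|) :=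
      add_le_add (add_le_add h₄ (h₂₂ _ _)) (h₂₂ _ _)
    _ = _ := by ring

section Covariance

variable {Ω : Type*} {F G : Ω → ℝ}

lemma sub_const_mul_sub_const_eq (a b : ℝ) :
    (fun ω => (F ω - a) * (G ω - b)) = fun ω => F ω * G ω - b * F ω - a * G ω + a * b := by
  ext; ring

variable [MeasurableSpace Ω] {μ : Measure Ω}

lemma MeasureTheory.Integrable.sub_const_mul_sub_const [IsFiniteMeasure μ] (hF : Integrable F μ)
    (hG : Integrable G μ) (hFG : Integrable (fun ω => F ω * G ω) μ) (a b : ℝ) :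
    Integrable (fun ω => (F ω - a) * (G ω - b)) μ := by
  rw [sub_const_mul_sub_const_eq]
  exact ((hFG.sub (hF.const_mul b)).sub (hG.const_mul a)).add (integrable_const _)

lemma integral_sub_integral_mul_sub_integral [IsProbabilityMeasure μ] (hF : Integrable F μ)
    (hG : Integrable G μ) (hFG : Integrable (fun ω => F ω * G ω) μ) :
    ∫ ω, (F ω - ∫ x, F x ∂μ) * (G ω - ∫ x, G x ∂μ) ∂μ
      = ∫ ω, F ω * G ω ∂μ - (∫ ω, F ω ∂μ) * ∫ ω, G ω ∂μ := by
  rw [sub_const_mul_sub_const_eq, integral_add (by fun_prop) (by fun_prop),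
    integral_sub (by fun_prop) (by fun_prop), integral_sub hFG (by fun_prop),
    integral_const_mul, integral_const_mul, integral_const]
  simp only [probReal_univ, one_smul]
  ring

end Covariance

lemma norm_integral_mul_sum_mul_sum_le {Ω α β : Type*} [MeasurableSpace Ω] {μ : Measure Ω}
    {F : α → Ω → ℝ} {G : β → Ω → ℝ} (hFG : ∀ t τ, Integrable (fun ω => F t ω * G τ ω) μ)
    {w : α → ℂ} (hw : ∀ t, ‖w t‖ ≤ 1) (a : ℂ) (b : ℝ) (T : Finset α) (U : Finset β) :
    ‖∫ ω, (a * ∑ t ∈ T, (F t ω : ℂ) * w t) * ((b * ∑ τ ∈ U, G τ ω : ℝ) : ℂ) ∂μ‖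
      ≤ ‖a‖ * |b| * ∑ t ∈ T, ∑ τ ∈ U, |∫ ω, F t ω * G τ ω ∂μ| := by
  have hsum : (fun ω => (a * ∑ t ∈ T, (F t ω : ℂ) * w t) * ((b * ∑ τ ∈ U, G τ ω : ℝ) : ℂ))
      = fun ω => ∑ t ∈ T, ∑ τ ∈ U, (a * b * w t) * ((F t ω * G τ ω : ℝ) : ℂ) := by
    ext ω
    push_cast
    rw [Finset.mul_sum, Finset.mul_sum, Finset.sum_mul_sum]
    exact Finset.sum_congr rfl fun t _ => Finset.sum_congr rfl fun τ _ => by ring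
  have hint (t τ) : Integrable (fun ω => (a * b * w t) * ((F t ω * G τ ω : ℝ) : ℂ)) μ :=
    (hFG t τ).ofReal.const_mul _
  rw [hsum, integral_finsetSum _ fun t _ => integrable_finsetSum _ fun τ _ => hint t τ]
  simp only [integral_finsetSum _ fun τ _ => hint _ τ, integral_const_mul, integral_complex_ofReal]
  calc _ ≤ ∑ t ∈ T, ∑ τ ∈ U, ‖(a * b * w t) * ((∫ ω, F t ω * G τ ω ∂μ : ℝ) : ℂ)‖ :=
        (norm_sum_le _ _).trans (Finset.sum_le_sum fun t _ => norm_sum_le _ _)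
    _ ≤ ∑ t ∈ T, ∑ τ ∈ U, ‖a‖ * |b| * |∫ ω, F t ω * G τ ω ∂μ| := by
        gcongr with t _ τ _
        simp only [norm_mul, Complex.norm_real, Real.norm_eq_abs]
        grw [hw t, mul_one]
    _ = _ := by simp only [Finset.mul_sum]

lemma integral_centered_mul_centered {Ω : Type*} [MeasurableSpace Ω] {μ : Measure Ω}
    [IsProbabilityMeasure μ] {X : ℤ → Ω → ℝ} {κ₂ : ℤ → ℝ} {κ₄ : ℤ → ℤ → ℤ → ℝ}
    (hint2 : ∀ s t : ℤ, Integrable (fun ω => X s ω * X t ω) μ)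
    (hint4 : ∀ a b c d : ℤ, Integrable (fun ω => X a ω * X b ω * X c ω * X d ω) μ)
    (hκ₂ : ∀ t r : ℤ, ∫ ω, X t ω * X (t + r) ω ∂μ = κ₂ r)
    (hκ₄ : ∀ t r₁ r₂ r₃ : ℤ,
      ∫ ω, X t ω * X (t + r₁) ω * X (t + r₂) ω * X (t + r₃) ω ∂μ =
        κ₄ r₁ r₂ r₃ + κ₂ r₁ * κ₂ (r₃ - r₂) + κ₂ r₂ * κ₂ (r₃ - r₁)
          + κ₂ r₃ * κ₂ (r₂ - r₁))
    (t i τ j : ℤ) :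
    ∫ ω, (X t ω * X i ω - κ₂ (i - t)) * (X τ ω * X (τ + j) ω - κ₂ j) ∂μ
      = κ₄ (i - t) (τ - t) (τ + j - t) + κ₂ (τ - t) * κ₂ (τ + j - i)
        + κ₂ (τ + j - t) * κ₂ (τ - i) := by
  have h₂ : ∫ ω, X t ω * X i ω ∂μ = κ₂ (i - t) := by simpa using hκ₂ t (i - t)
  have h₄ := hκ₄ t (i - t) (τ - t) (τ + j - t)
  simp only [add_sub_cancel] at h₄
  rw [← h₂, ← hκ₂ τ j, integral_sub_integral_mul_sub_integral (hint2 _ _) (hint2 _ _)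
    (by simpa only [mul_assoc] using hint4 t i τ (τ + j)), hκ₂, h₂]
  simp only [← mul_assoc, h₄]
  rw [show τ + j - t - (τ - t) = j by ring, show τ + j - t - (i - t) = τ + j - i by ring,
    show τ - t - (i - t) = τ - i by ring]
  ring

theorem stmt_18_general {Ω : Type*} [MeasurableSpace Ω] (μ : Measure Ω) [IsProbabilityMeasure μ]
    (X : ℤ → Ω → ℝ) (κ₂ : ℤ → ℝ) (κ₄ : ℤ → ℤ → ℤ → ℝ) (S₂ S₄ : ℝ)
    (hint2 : ∀ s t : ℤ, Integrable (fun ω => X s ω * X t ω) μ)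
    (hint4 : ∀ a b c d : ℤ, Integrable (fun ω => X a ω * X b ω * X c ω * X d ω) μ)
    (hκ₂ : ∀ t r : ℤ, ∫ ω, X t ω * X (t + r) ω ∂μ = κ₂ r)
    -- fourth-order stationarity: the fourth cumulant is shift invariant
    (hκ₄ : ∀ t r₁ r₂ r₃ : ℤ,
      ∫ ω, X t ω * X (t + r₁) ω * X (t + r₂) ω * X (t + r₃) ω ∂μ =
        κ₄ r₁ r₂ r₃ + κ₂ r₁ * κ₂ (r₃ - r₂) + κ₂ r₂ * κ₂ (r₃ - r₁)
          + κ₂ r₃ * κ₂ (r₂ - r₁))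
    (hS₂sum : Summable fun r : ℤ => |κ₂ r|)
    (hS₂ : S₂ = ∑' r : ℤ, |κ₂ r|)
    (hS₄sum : Summable fun r : ℤ × ℤ × ℤ => |κ₄ r.1 r.2.1 r.2.2|)
    (hS₄ : S₄ = ∑' r : ℤ × ℤ × ℤ, |κ₄ r.1 r.2.1 r.2.2|)
    (n : ℕ) (ω : ℝ) (i : ℤ)
    (j : ℕ)
    (μcheck : Ω → ℂ) (ccheck : Ω → ℝ)
    (hμcheck : μcheck = fun ω' => (n : ℂ)⁻¹ *
      ∑ t ∈ Finset.Icc (1 : ℤ) (n : ℤ),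
        ((X t ω' * X i ω' - κ₂ (i - t) : ℝ) : ℂ) *
          Complex.exp (Complex.I * (t : ℂ) * (ω : ℂ)))
    (hccheck : ccheck = fun ω' => (n : ℝ)⁻¹ *
      ∑ t ∈ Finset.Icc (1 : ℤ) ((n : ℤ) - j), (X t ω' * X (t + j) ω' - κ₂ j)) :
    ‖∫ ω', μcheck ω' * ((ccheck ω' : ℝ) : ℂ) ∂μ‖ ≤ (2 * S₂ ^ 2 + S₄) / n ^ 2 := by
  subst hμcheck hccheck hS₂ hS₄
  have hphase (t : ℤ) : ‖Complex.exp (Complex.I * (t : ℂ) * (ω : ℂ))‖ ≤ 1 := by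
    simp [Complex.norm_exp]
  have hcentered (t τ : ℤ) := (hint2 t i).sub_const_mul_sub_const (hint2 τ (τ + j))
    (by simpa only [mul_assoc] using hint4 t i τ (τ + j)) (κ₂ (i - t)) (κ₂ j)
  beta_reduce
  calc _ ≤ ‖(n : ℂ)⁻¹‖ * |(n : ℝ)⁻¹| *
          ∑ t ∈ Finset.Icc (1 : ℤ) n, ∑ τ ∈ Finset.Icc (1 : ℤ) (n - j),
            |∫ ω', (X t ω' * X i ω' - κ₂ (i - t)) * (X τ ω' * X (τ + j) ω' - κ₂ j) ∂μ| :=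
        norm_integral_mul_sum_mul_sum_le hcentered hphase _ _ _ _
    _ ≤ (n : ℝ)⁻¹ * (n : ℝ)⁻¹ *
          (2 * (∑' r, |κ₂ r|) ^ 2 + ∑' r : ℤ × ℤ × ℤ, |κ₄ r.1 r.2.1 r.2.2|) := by
        simp only [integral_centered_mul_centered hint2 hint4 hκ₂ hκ₄, norm_inv,
          Complex.norm_natCast, abs_inv, Nat.abs_cast]
        gcongr
        exact sum_sum_abs_cumulant_terms_le hS₂sum hS₄sum _ _ _ _
    _ = _ := by ring

/-- Cumulant bound: `|cov(μ̌_i, č_j)| ≤ (2 S₂² + S₄)/n²` for the centered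
half-periodogram term `μ̌_i` and centered sample autocovariance `č_j`. -/
theorem stmt_18 {Ω : Type*} [MeasurableSpace Ω] (μ : Measure Ω) [IsProbabilityMeasure μ]
    (X : ℤ → Ω → ℝ) (κ₂ : ℤ → ℝ) (κ₄ : ℤ → ℤ → ℤ → ℝ) (S₂ S₄ : ℝ)
    (hL4 : ∀ t : ℤ, MemLp (X t) 4 μ)
    (hint2 : ∀ s t : ℤ, Integrable (fun ω => X s ω * X t ω) μ)
    (hint4 : ∀ a b c d : ℤ, Integrable (fun ω => X a ω * X b ω * X c ω * X d ω) μ)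
    (hmean : ∀ t : ℤ, ∫ ω, X t ω ∂μ = 0)
    (hκ₂ : ∀ t r : ℤ, ∫ ω, X t ω * X (t + r) ω ∂μ = κ₂ r)
    -- fourth-order stationarity: the fourth cumulant is shift invariant
    (hκ₄ : ∀ t r₁ r₂ r₃ : ℤ,
      ∫ ω, X t ω * X (t + r₁) ω * X (t + r₂) ω * X (t + r₃) ω ∂μ =
        κ₄ r₁ r₂ r₃ + κ₂ r₁ * κ₂ (r₃ - r₂) + κ₂ r₂ * κ₂ (r₃ - r₁)
          + κ₂ r₃ * κ₂ (r₂ - r₁))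
    (hS₂sum : Summable fun r : ℤ => |κ₂ r|)
    (hS₂ : S₂ = ∑' r : ℤ, |κ₂ r|)
    (hS₄sum : Summable fun r : ℤ × ℤ × ℤ => |κ₄ r.1 r.2.1 r.2.2|)
    (hS₄ : S₄ = ∑' r : ℤ × ℤ × ℤ, |κ₄ r.1 r.2.1 r.2.2|)
    (n : ℕ) (hn : 1 ≤ n) (ω : ℝ) (i : ℤ) (hi : i ∈ Finset.Icc (1 : ℤ) (n : ℤ))
    (j : ℕ) (hj : j ≤ n)
    (μcheck : Ω → ℂ) (ccheck : Ω → ℝ)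
    (hμcheck : μcheck = fun ω' => (n : ℂ)⁻¹ *
      ∑ t ∈ Finset.Icc (1 : ℤ) (n : ℤ),
        ((X t ω' * X i ω' - κ₂ (i - t) : ℝ) : ℂ) *
          Complex.exp (Complex.I * (t : ℂ) * (ω : ℂ)))
    (hccheck : ccheck = fun ω' => (n : ℝ)⁻¹ *
      ∑ t ∈ Finset.Icc (1 : ℤ) ((n : ℤ) - j), (X t ω' * X (t + j) ω' - κ₂ j)) :
    ‖∫ ω', μcheck ω' * ((ccheck ω' : ℝ) : ℂ) ∂μ‖ ≤ (2 * S₂ ^ 2 + S₄) / n ^ 2 :=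
  stmt_18_general μ X κ₂ κ₄ S₂ S₄ hint2 hint4 hκ₂ hκ₄ hS₂sum hS₂ hS₄sum hS₄ n ω i j μcheck ccheck
    hμcheck hccheck
end
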